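/- Let g be a finite multi strategic game where each agent's preference ≺_a on outcomes is a strict partial order. Define BR_a(γ) at node n by BR^n_a(γ) = {s^n | s ∈ S_a ∧ ∀ s' ∈ S_a, ¬(seq(γ; s, n) ≺^{fct}_a seq(γ; s', n))}, and BR_a(γ) = ∏_n BR^n_a(γ). Then each BR^n_a(γ) is nonempty, BR_a is monotone (γ ⊆ δ implies BR^n_a(γ) ⊆ BR^n_a(δ)), and the resulting ndbr multi strategic game has an ndbr equilibrium. -/

import Mathlib

/-- The induced sequence of sets of outcomes of an nd strategy profile `σ`,
starting at node `n`. -/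
def seqOut {V A Oc : Type*} {S : V → A → Type*}
    (P : ∀ n : V, (∀ a, S n a) → Oc × V) (σ : ∀ n a, Set (S n a)) :
    ℕ → V → Set Oc
  | 0, n => (fun x => (P n x).1) '' {x | ∀ a, x a ∈ σ n a}
  | k + 1, n => ⋃ x ∈ {x : ∀ a, S n a | ∀ a, x a ∈ σ n a}, seqOut P σ k (P n x).2

/-- `X ≺^{set} Y`: every element of `X` is `≺`-below every element of `Y`. -/
def setPrec {E : Type*} (r : E → E → Prop) (X Y : Set E) : Prop :=
  ∀ x ∈ X, ∀ y ∈ Y, r x y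

/-- The nd profile `(γ ; s)`: agent `a` plays the pure strategy `s`
(singletons at each node), the other agents play `γ`. -/
def insPure {V A : Type*} [DecidableEq A] {S : V → A → Type*} (a : A)
    (s : ∀ n, S n a) (γ : ∀ n, ∀ b : {x : A // x ≠ a}, Set (S n b.1)) :
    ∀ n b, Set (S n b) :=
  fun n b => if h : b = a then cast (congrArg (fun x => Set (S n x)) h).symm ({s n} : Set (S n a))
    else γ n ⟨b, h⟩

/-- `BR^n_a(γ)`: local strategies `s^n` of strategies `s ∈ S_a` such that no
`s' ∈ S_a` satisfies `seq(γ;s,n) ≺^{fct}_a seq(γ;s',n)`. -/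
def BRn {V A Oc : Type*} [DecidableEq A] {S : V → A → Type*}
    (P : ∀ n : V, (∀ a, S n a) → Oc × V) (prec : A → Oc → Oc → Prop) (a : A)
    (γ : ∀ n, ∀ b : {x : A // x ≠ a}, Set (S n b.1)) (n : V) : Set (S n a) :=
  {t | ∃ s : ∀ m, S m a, s n = t ∧ ∀ s' : ∀ m, S m a,
    ¬ (∀ k, setPrec (prec a) (seqOut P (insPure a s γ) k n)
      (seqOut P (insPure a s' γ) k n))}

/-!
A best response exists because, for fixed `γ`, the relation `seq(γ;s,n) ≺^{fct}_a seq(γ;s',n)` is a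
strict partial order on the finite set of pure strategies `s` (the sequences are nonempty, so
irreflexivity and transitivity of `≺_a` carry over), hence has a maximal element. Best responses
only shrink when the other agents' sets shrink, so iterating the best-response map from the
full profile gives a decreasing chain of nonempty profiles; in the finite lattice of profiles it
becomes stationary, and its limit is an ndbr equilibrium.
-/

theorem Finite.exists_forall_not_rel {α : Type*} [Finite α] [Nonempty α] {r : α → α → Prop}
    (hirr : ∀ x, ¬ r x x) (htr : Transitive r) : ∃ x, ∀ y, ¬ r x y := by
  have : Std.Irrefl (Function.swap r) := ⟨hirr⟩
  have : IsTrans α (Function.swap r) := ⟨fun _ _ _ hxy hyz => htr hyz hxy⟩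
  obtain ⟨x, -, hx⟩ := (Finite.wellFounded_of_trans_of_irrefl (Function.swap r)).has_min
    Set.univ Set.univ_nonempty
  exact ⟨x, fun y => hx y trivial⟩

theorem Monotone.exists_isFixedPt_iterate_of_map_le {α : Type*} [PartialOrder α]
    [WellFoundedLT α] {f : α → α} (hf : Monotone f) {x : α} (hx : f x ≤ x) :
    ∃ n, Function.IsFixedPt f (f^[n] x) := by
  obtain ⟨n, hn⟩ := WellFoundedLT.antitone_chain_condition (hf.antitone_iterate_of_map_le hx)
  refine ⟨n, ?_⟩
  rw [Function.IsFixedPt, ← Function.iterate_succ_apply' f n x]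
  exact (hn (n + 1) n.le_succ).symm

section SetPrec

variable {E : Type*} {r : E → E → Prop} {X Y Z : Set E}

theorem not_setPrec_self (hirr : ∀ x, ¬ r x x) (hX : X.Nonempty) : ¬ setPrec r X X := by
  obtain ⟨x, hx⟩ := hX
  exact fun h => hirr x (h x hx x hx)

theorem setPrec_trans (htr : Transitive r) (hY : Y.Nonempty) (hXY : setPrec r X Y)
    (hYZ : setPrec r Y Z) : setPrec r X Z := by
  obtain ⟨y, hy⟩ := hY
  exact fun x hx z hz => htr (hXY x hx y hy) (hYZ y hy z hz)

end SetPrec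

section BestResponse

variable {V A Oc : Type*} {S : V → A → Type*} (P : ∀ n : V, (∀ a, S n a) → Oc × V)

theorem seqOut_mono {σ δ : ∀ n a, Set (S n a)} (h : ∀ n a, σ n a ⊆ δ n a) (k : ℕ) (n : V) :
    seqOut P σ k n ⊆ seqOut P δ k n := by
  induction k generalizing n with
  | zero => exact Set.image_mono fun x hx a => h n a (hx a)
  | succ k ih =>
    simp only [seqOut]
    exact Set.biUnion_mono (fun x hx a => h n a (hx a)) fun x _ => ih _

theorem seqOut_nonempty {σ : ∀ n a, Set (S n a)} (h : ∀ n a, (σ n a).Nonempty) (k : ℕ) (n : V) :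
    (seqOut P σ k n).Nonempty := by
  induction k generalizing n with
  | zero =>
    choose x hx using h n
    exact ⟨(P n x).1, x, hx, rfl⟩
  | succ k ih =>
    choose x hx using h n
    obtain ⟨o, ho⟩ := ih (P n x).2
    exact ⟨o, Set.mem_biUnion hx ho⟩

variable [DecidableEq A] (prec : A → Oc → Oc → Prop) {a : A} (s : ∀ n, S n a)

theorem insPure_nonempty {γ : ∀ n, ∀ b : {x : A // x ≠ a}, Set (S n b.1)}
    (h : ∀ n b, (γ n b).Nonempty) (n : V) (b : A) : (insPure a s γ n b).Nonempty := by
  unfold insPure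
  split
  · subst b; exact Set.singleton_nonempty (s n)
  · exact h n _

theorem insPure_mono {γ δ : ∀ n, ∀ b : {x : A // x ≠ a}, Set (S n b.1)}
    (h : ∀ n b, γ n b ⊆ δ n b) (n : V) (b : A) : insPure a s γ n b ⊆ insPure a s δ n b := by
  unfold insPure
  split
  · exact subset_rfl
  · exact h n _

theorem BRn_mono {γ δ : ∀ n, ∀ b : {x : A // x ≠ a}, Set (S n b.1)}
    (h : ∀ n b, γ n b ⊆ δ n b) (n : V) : BRn P prec a γ n ⊆ BRn P prec a δ n := by
  rintro t ⟨s, rfl, hs⟩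
  refine ⟨s, rfl, fun s' hss' => hs s' fun k x hx y hy => ?_⟩
  exact hss' k x (seqOut_mono P (insPure_mono s h) k n hx) y
    (seqOut_mono P (insPure_mono s' h) k n hy)

theorem BRn_nonempty [Finite V] [∀ n a, Nonempty (S n a)] [∀ n a, Finite (S n a)]
    (hirr : ∀ a oc, ¬ prec a oc oc) (htr : ∀ a, Transitive (prec a))
    {γ : ∀ n, ∀ b : {x : A // x ≠ a}, Set (S n b.1)} (hγ : ∀ n b, (γ n b).Nonempty) (n : V) :
    (BRn P prec a γ n).Nonempty := by
  have hseq : ∀ (s : ∀ m, S m a) k, (seqOut P (insPure a s γ) k n).Nonempty :=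
    fun s k => seqOut_nonempty P (insPure_nonempty s hγ) k n
  obtain ⟨s, hs⟩ := Finite.exists_forall_not_rel
    (r := fun s s' : ∀ m, S m a =>
      ∀ k, setPrec (prec a) (seqOut P (insPure a s γ) k n) (seqOut P (insPure a s' γ) k n))
    (fun s h => not_setPrec_self (hirr a) (hseq s 0) (h 0))
    (fun _ s₂ _ h₁₂ h₂₃ k => setPrec_trans (htr a) (hseq s₂ k) (h₁₂ k) (h₂₃ k))
  exact ⟨s n, s, rfl, hs⟩

def bestResponse (σ : ∀ n a, Set (S n a)) : ∀ n a, Set (S n a) :=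
  fun n a => BRn P prec a (fun m b => σ m b.1) n

theorem bestResponse_monotone : Monotone (bestResponse P prec) :=
  fun _ _ h n _ => BRn_mono P prec (fun m b => h m b.1) n

theorem bestResponse_nonempty [Finite V] [∀ n a, Nonempty (S n a)] [∀ n a, Finite (S n a)]
    (hirr : ∀ a oc, ¬ prec a oc oc) (htr : ∀ a, Transitive (prec a))
    {σ : ∀ n a, Set (S n a)} (hσ : ∀ n a, (σ n a).Nonempty) (n : V) (a : A) :
    (bestResponse P prec σ n a).Nonempty :=
  BRn_nonempty P prec hirr htr (fun m b => hσ m b.1) n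

end BestResponse

theorem stmt18_general {V A Oc : Type*} [DecidableEq A] [Finite V]
    [Finite A] {S : V → A → Type*}
    [∀ n a, Nonempty (S n a)] [∀ n a, Finite (S n a)]
    (P : ∀ n : V, (∀ a, S n a) → Oc × V) (prec : A → Oc → Oc → Prop)
    (hirr : ∀ a oc, ¬ prec a oc oc) (htr : ∀ a, Transitive (prec a)) :
    (∀ (a : A) (γ : ∀ n, ∀ b : {x : A // x ≠ a}, Set (S n b.1)),
      (∀ n b, (γ n b).Nonempty) → ∀ n, (BRn P prec a γ n).Nonempty) ∧
    (∀ (a : A) (γ δ : ∀ n, ∀ b : {x : A // x ≠ a}, Set (S n b.1)),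
      (∀ n b, (γ n b).Nonempty) → (∀ n b, (δ n b).Nonempty) →
      (∀ n b, γ n b ⊆ δ n b) → ∀ n, BRn P prec a γ n ⊆ BRn P prec a δ n) ∧
    ∃ σ : ∀ n a, Set (S n a), (∀ n a, (σ n a).Nonempty) ∧
      ∀ (a : A) (n : V), σ n a ⊆ BRn P prec a (fun n b => σ n b.1) n := by
  refine ⟨fun _ γ hγ n => BRn_nonempty P prec hirr htr hγ n,
    fun _ γ δ _ _ h n => BRn_mono P prec h n, ?_⟩
  obtain ⟨k, hfix⟩ := (bestResponse_monotone P prec).exists_isFixedPt_iterate_of_map_le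
    (le_top : bestResponse P prec ⊤ ≤ ⊤)
  refine ⟨(bestResponse P prec)^[k] ⊤, ?_, fun a n => (congrFun₂ hfix n a).ge⟩
  exact Function.Iterate.rec _ (fun _ _ => Set.univ_nonempty)
    (fun σ hσ => bestResponse_nonempty P prec hirr htr hσ) k

theorem stmt18 {V A Oc : Type*} [DecidableEq A] [Nonempty V] [Finite V]
    [Nonempty A] [Finite A] {S : V → A → Type*}
    [∀ n a, Nonempty (S n a)] [∀ n a, Finite (S n a)]
    (P : ∀ n : V, (∀ a, S n a) → Oc × V) (prec : A → Oc → Oc → Prop)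
    (hirr : ∀ a oc, ¬ prec a oc oc) (htr : ∀ a, Transitive (prec a)) :
    (∀ (a : A) (γ : ∀ n, ∀ b : {x : A // x ≠ a}, Set (S n b.1)),
      (∀ n b, (γ n b).Nonempty) → ∀ n, (BRn P prec a γ n).Nonempty) ∧
    (∀ (a : A) (γ δ : ∀ n, ∀ b : {x : A // x ≠ a}, Set (S n b.1)),
      (∀ n b, (γ n b).Nonempty) → (∀ n b, (δ n b).Nonempty) →
      (∀ n b, γ n b ⊆ δ n b) → ∀ n, BRn P prec a γ n ⊆ BRn P prec a δ n) ∧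
    ∃ σ : ∀ n a, Set (S n a), (∀ n a, (σ n a).Nonempty) ∧
      ∀ (a : A) (n : V), σ n a ⊆ BRn P prec a (fun n b => σ n b.1) n :=
  stmt18_general P prec hirr htr
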